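/- Let V be a vector space of dimension d ≥ 2 over an infinite field k, and let V₁,…,Vₙ be finitely many proper subspaces of V with dim_k V_i ≤ dim_k V − 2 for each i. Then there exist a, b ∈ V such that the two-dimensional subspace H = ka ⊕ kb satisfies H ∩ V_i = 0 for i = 1,…,n. -/

import Mathlib

universe u v

/-!
Pick `a` outside `{0}` and every `Vᵢ`, then `b` outside `ka` and every `Vᵢ ⊕ ka`; an infinite
field makes both choices possible since a vector space is never a finite union of proper
subspaces, and `dim Vᵢ ≤ dim V - 2` keeps each `Vᵢ ⊕ ka` proper. A vector of `ka ⊕ kb` lying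
in `Vᵢ` has no `b`-component because `b ∉ Vᵢ ⊕ ka`, hence no `a`-component because `a ∉ Vᵢ`.
-/

open Module

namespace Submodule

variable {K V : Type*} [DivisionRing K] [AddCommGroup V] [Module K V]

theorem exists_forall_notMem_of_ne_top [Infinite K] {ι : Type*} [Finite ι] {q : Submodule K V}
    (hq : q ≠ ⊤) {p : ι → Submodule K V} (hp : ∀ i, p i ≠ ⊤) :
    ∃ x, x ∉ q ∧ ∀ i, x ∉ p i := by
  have hcover : ⋃ o : Option ι, ((o.elim q p : Submodule K V) : Set V) ≠ Set.univ := by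
    intro h
    obtain ⟨_ | i, hi⟩ := Subspace.exists_eq_top_of_iUnion_eq_univ h
    exacts [hq hi, hp i hi]
  obtain ⟨x, -, hx⟩ := Set.exists_of_ssubset (Set.ssubset_univ_iff.mpr hcover)
  simp only [Set.mem_iUnion, not_exists] at hx
  exact ⟨x, hx none, fun i => hx (some i)⟩

theorem ne_top_of_finrank_lt {W : Submodule K V} (h : finrank K W < finrank K V) : W ≠ ⊤ := by
  rintro rfl
  exact (finrank_top K V ▸ h).false

theorem sup_span_singleton_ne_top [FiniteDimensional K V] {W : Submodule K V}
    (h : finrank K W + 1 < finrank K V) (a : V) : W ⊔ K ∙ a ≠ ⊤ := by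
  refine ne_top_of_finrank_lt ((finrank_add_le_finrank_add_finrank W _).trans_lt ?_)
  have : finrank K (K ∙ a) ≤ 1 := (finrank_span_le_card {a}).trans (by simp)
  omega

theorem span_pair_inf_eq_bot {W : Submodule K V} {a b : V} (ha : a ∉ W)
    (hb : b ∉ W ⊔ K ∙ a) : span K {a, b} ⊓ W = ⊥ := by
  have ha0 : a ≠ 0 := fun h => ha (h ▸ W.zero_mem)
  have hb0 : b ≠ 0 := fun h => hb (h ▸ zero_mem _)
  have hdisj : Disjoint W (K ∙ a ⊔ K ∙ b) :=
    ((disjoint_span_singleton' ha0).mpr ha).disjoint_sup_right_of_disjoint_sup_left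
      ((disjoint_span_singleton' hb0).mpr hb)
  rw [span_insert]
  exact hdisj.symm.eq_bot

end Submodule

theorem linearIndependent_pair_of_notMem_span {K V : Type*} [DivisionRing K] [AddCommGroup V]
    [Module K V] {a b : V} (ha : a ≠ 0) (hb : b ∉ K ∙ a) : LinearIndependent K ![a, b] :=
  (LinearIndependent.pair_iff' ha).mpr fun c hc =>
    hb (hc ▸ Submodule.smul_mem _ c (Submodule.mem_span_singleton_self a))

theorem statement10_general {k : Type u} {V : Type v} [Field k] [Infinite k]
    [AddCommGroup V] [Module k V] [FiniteDimensional k V]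
    (d : ℕ) (hd : 2 ≤ d) (hdim : Module.finrank k V = d)
    (n : ℕ) (Vs : Fin n → Submodule k V)
    (hdims : ∀ i, Module.finrank k ↥(Vs i) ≤ Module.finrank k V - 2) :
    ∃ a b : V, LinearIndependent k ![a, b] ∧
      ∀ i, Submodule.span k {a, b} ⊓ Vs i = ⊥ := by
  have hV : 2 ≤ finrank k V := hdim ▸ hd
  have hlt : ∀ i, finrank k (Vs i) + 1 < finrank k V := fun i => by have := hdims i; omega
  have hbot : finrank k (⊥ : Submodule k V) + 1 < finrank k V := by rw [finrank_bot]; omega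
  obtain ⟨a, ha0, ha⟩ := Submodule.exists_forall_notMem_of_ne_top (p := Vs)
    (Submodule.ne_top_of_finrank_lt (Nat.lt_of_succ_lt hbot))
    fun i => Submodule.ne_top_of_finrank_lt (Nat.lt_of_succ_lt (hlt i))
  have hspan : k ∙ a ≠ ⊤ := by simpa using Submodule.sup_span_singleton_ne_top hbot a
  obtain ⟨b, hba, hb⟩ := Submodule.exists_forall_notMem_of_ne_top hspan
    fun i => Submodule.sup_span_singleton_ne_top (hlt i) a
  exact ⟨a, b, linearIndependent_pair_of_notMem_span (by simpa using ha0) hba,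
    fun i => Submodule.span_pair_inf_eq_bot (ha i) (hb i)⟩

/-- Let `V` be a vector space of dimension `d ≥ 2` over an infinite
field `k`, and let `V₁, …, Vₙ` be finitely many proper subspaces of `V` with
`dim Vᵢ ≤ d - 2`.  Then there exist `a, b ∈ V`, linearly independent, such that the
plane `H = ka ⊕ kb` satisfies `H ∩ Vᵢ = 0` for all `i`. -/
theorem statement10 {k : Type u} {V : Type v} [Field k] [Infinite k]
    [AddCommGroup V] [Module k V] [FiniteDimensional k V]
    (d : ℕ) (hd : 2 ≤ d) (hdim : Module.finrank k V = d)
    (n : ℕ) (Vs : Fin n → Submodule k V)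
    (hproper : ∀ i, Vs i ≠ ⊤)
    (hdims : ∀ i, Module.finrank k ↥(Vs i) ≤ Module.finrank k V - 2) :
    ∃ a b : V, LinearIndependent k ![a, b] ∧
      ∀ i, Submodule.span k {a, b} ⊓ Vs i = ⊥ :=
  statement10_general d hd hdim n Vs hdims
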